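/- Let r, k ≥ 2, 1 ≤ ℓ ≤ k-1, and let n ≥ k satisfy (k-ℓ) | (n-ℓ). If d ≥ 1 divides each of n, k and ℓ, then R̂_r(P_n^{(k,ℓ)}) ≤ R̂_r(P_{n/d}^{(k/d, ℓ/d)}). -/

import Mathlib

open Finset

/-- A `k`-uniform hypergraph, given by its (finite) edge set; vertices are natural numbers. -/
def IsUniform (k : ℕ) (G : Finset (Finset ℕ)) : Prop :=
  ∀ e ∈ G, e.card = k

/-- The vertex set of a hypergraph. -/
def hVerts (G : Finset (Finset ℕ)) : Finset ℕ := G.biUnion id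

/-- `G` contains a copy of `H`, i.e. a subgraph isomorphic to `H`. -/
def IsCopy (H G : Finset (Finset ℕ)) : Prop :=
  ∃ f : ℕ → ℕ, Set.InjOn f ↑(hVerts H) ∧ ∀ e ∈ H, e.image f ∈ G

/-- `G →_r H`: every `r`-coloring of the edges of `G` yields a monochromatic copy of `H`. -/
def Arrows (r : ℕ) (G H : Finset (Finset ℕ)) : Prop :=
  ∀ χ : Finset ℕ → Fin r, ∃ c : Fin r, IsCopy H (G.filter fun e => χ e = c)

/-- The `r`-color size-Ramsey number of `H`: the minimum number of edges of a
`k`-uniform hypergraph `G` with `G →_r H`. -/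
noncomputable def sizeRamsey (k r : ℕ) (H : Finset (Finset ℕ)) : ℕ :=
  sInf {m | ∃ G : Finset (Finset ℕ), IsUniform k G ∧ Arrows r G H ∧ G.card = m}

/-- The `r`-color Ramsey number of `H`: the minimum number of vertices of a
`k`-uniform hypergraph `G` with `G →_r H`. -/
noncomputable def vertexRamsey (k r : ℕ) (H : Finset (Finset ℕ)) : ℕ :=
  sInf {m | ∃ G : Finset (Finset ℕ), IsUniform k G ∧ Arrows r G H ∧ (hVerts G).card = m}

/-- The `(k,ℓ)`-path with `m` edges: edge `i` (for `0 ≤ i < m`) is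
`{i(k-ℓ), i(k-ℓ)+1, …, i(k-ℓ)+k-1}`. -/
def pathWithEdges (k l m : ℕ) : Finset (Finset ℕ) :=
  (Finset.range m).image fun i => (Finset.range k).image fun j => i * (k - l) + j

/-- The `(k,ℓ)`-path on `n` vertices, `P_n^{(k,ℓ)}`; it has `(n-ℓ)/(k-ℓ)` edges. -/
def hPath (k l n : ℕ) : Finset (Finset ℕ) :=
  pathWithEdges k l ((n - l) / (k - l))

/-!
Blowing up every vertex `v` into the `d` vertices `d * v, …, d * v + d - 1` turns the
`(k, ℓ)`-path with `m` edges into the `(d k, d ℓ)`-path with `m` edges. An edge colouring of the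
blow-up of a `k`-graph `G` pulls back to a colouring of `G`; a monochromatic copy of the small
path in `G` then blows up to a monochromatic copy of the big path in the blow-up of `G`, which has
as many edges as `G`. The hypergraph Ramsey theorem provides some `G` arrowing the small path, so
its size-Ramsey number is attained and is not the junk value `sInf ∅ = 0`.
-/

def RamseyProperty (α κ : Type*) (k : ℕ) : Prop :=
  ∀ n : ℕ, ∃ N : ℕ, ∀ (χ : Finset α → κ) (A : Finset α), N ≤ #A →
    ∃ S ⊆ A, n ≤ #S ∧ ∃ c : κ, ∀ e ⊆ S, #e = k → χ e = c

namespace RamseyProperty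

variable {α κ : Type*} {k : ℕ}

theorem zero : RamseyProperty α κ 0 := by
  intro n
  refine ⟨n, fun χ A hA => ?_⟩
  obtain ⟨S, hSA, hS⟩ := exists_subset_card_eq hA
  exact ⟨S, hSA, hS.ge, χ ∅, fun e _ he => by rw [card_eq_zero.mp he]⟩

variable [LinearOrder α]

theorem exists_endHomogeneous (h : RamseyProperty α κ k) (t : ℕ) :
    ∃ N : ℕ, ∀ (χ : Finset α → κ) (A : Finset α), N ≤ #A → ∃ S ⊆ A, #S = t ∧
      ∃ col : α → κ, ∀ x ∈ S, ∀ e ⊆ S.filter (x < ·), #e = k → χ (insert x e) = col x := by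
  induction t with
  | zero => exact ⟨0, fun χ A _ => ⟨∅, empty_subset A, rfl, fun _ => χ ∅, by simp⟩⟩
  | succ t ih =>
    -- Split off the least element `x` of `A` and make `e ↦ χ (insert x e)` monochromatic on
    -- the rest, then recurse inside that monochromatic set.
    obtain ⟨Nt, hNt⟩ := ih
    obtain ⟨N, hN⟩ := h Nt
    refine ⟨N + 1, fun χ A hA => ?_⟩
    have hA₀ : A.Nonempty := card_pos.mp (by omega)
    set x := A.min' hA₀
    have hxA : x ∈ A := min'_mem A hA₀
    obtain ⟨B, hBA, hB, cx, hcx⟩ := hN (fun e => χ (insert x e)) (A.erase x)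
      (by rw [card_erase_of_mem hxA]; omega)
    obtain ⟨S, hSB, hS, col, hcol⟩ := hNt χ B hB
    have hSA : S ⊆ A.erase x := hSB.trans hBA
    have hxS : ∀ z ∈ S, x < z := fun z hz =>
      lt_of_le_of_ne (min'_le A z (mem_of_mem_erase (hSA hz))) (ne_of_mem_erase (hSA hz)).symm
    have hfilter : ∀ y ∈ insert x S, (insert x S).filter (y < ·) = S.filter (y < ·) := by
      intro y hy
      rw [filter_insert, if_neg (not_lt.mpr (min'_le A y (insert_subset hxA
        (hSA.trans (erase_subset x A)) hy)))]
    refine ⟨insert x S, insert_subset hxA (hSA.trans (erase_subset x A)),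
      by rw [card_insert_of_notMem fun hx => lt_irrefl x (hxS x hx), hS],
      Function.update col x cx, fun y hy e he hek => ?_⟩
    rw [hfilter y hy] at he
    rcases mem_insert.mp hy with rfl | hyS
    · rw [Function.update_self]
      exact hcx e (he.trans ((filter_subset _ S).trans hSB)) hek
    · rw [Function.update_of_ne (hxS y hyS).ne']
      exact hcol y hyS e he hek

theorem succ [Fintype κ] (h : RamseyProperty α κ k) : RamseyProperty α κ (k + 1) := by
  classical
  intro n
  obtain ⟨N, hN⟩ := h.exists_endHomogeneous (Fintype.card κ * n)
  refine ⟨N, fun χ A hA => ?_⟩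
  obtain ⟨S, hSA, hS, col, hcol⟩ := hN χ A hA
  -- On a largest colour class of `col`, the colour of `e` is that of its least element.
  obtain ⟨c, -, hc⟩ := exists_le_card_fiber_of_mul_le_card_of_maps_to (f := col)
    (fun _ _ => mem_univ _) ⟨χ ∅, mem_univ _⟩ (by rw [card_univ, hS])
  refine ⟨S.filter (col · = c), (filter_subset _ _).trans hSA, hc, c, fun e he hek => ?_⟩
  have he₀ : e.Nonempty := card_pos.mp (by omega)
  set x := e.min' he₀
  have hxe : x ∈ e := min'_mem e he₀
  have hx := mem_filter.mp (he hxe)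
  have habove : e.erase x ⊆ S.filter (x < ·) := fun z hz =>
    mem_filter.mpr ⟨(mem_filter.mp (he (mem_of_mem_erase hz))).1,
      lt_of_le_of_ne (min'_le e z (mem_of_mem_erase hz)) (ne_of_mem_erase hz).symm⟩
  rw [← insert_erase hxe, hcol x hx.1 _ habove (by rw [card_erase_of_mem hxe, hek]; rfl), hx.2]

end RamseyProperty

theorem ramseyProperty (α κ : Type*) [LinearOrder α] [Fintype κ] (k : ℕ) :
    RamseyProperty α κ k := by
  induction k with
  | zero => exact .zero
  | succ k ih => exact ih.succ

theorem subset_hVerts {H : Finset (Finset ℕ)} {e : Finset ℕ} (he : e ∈ H) : e ⊆ hVerts H :=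
  subset_biUnion_of_mem id he

theorem exists_arrows_of_isUniform (r : ℕ) {k : ℕ} {H : Finset (Finset ℕ)}
    (hH : IsUniform k H) : ∃ G, IsUniform k G ∧ Arrows r G H := by
  obtain ⟨N, hN⟩ := ramseyProperty ℕ (Fin r) k #(hVerts H)
  refine ⟨powersetCard k (range N), fun e he => (mem_powersetCard.mp he).2, fun χ => ?_⟩
  obtain ⟨S, hSN, hVS, c, hc⟩ := hN χ (range N) (by rw [card_range])
  obtain ⟨f, hfS, hf⟩ := (hVerts H).finite_toSet.exists_injOn_of_encard_le
    (t := (S : Set ℕ)) (by simpa using hVS)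
  refine ⟨c, f, hf, fun e he => ?_⟩
  have heV := subset_hVerts he
  have hfe : e.image f ⊆ S := image_subset_iff.mpr fun v hv => hfS (heV hv)
  have hcard : #(e.image f) = k := by
    rw [card_image_of_injOn (hf.mono (by simpa using heV)), hH e he]
  exact mem_filter.mpr ⟨mem_powersetCard.mpr ⟨hfe.trans hSN, hcard⟩, hc _ hfe hcard⟩

theorem sizeRamsey_le {k r : ℕ} {G H : Finset (Finset ℕ)} (hG : IsUniform k G)
    (hGH : Arrows r G H) : sizeRamsey k r H ≤ #G :=
  Nat.sInf_le ⟨G, hG, hGH, rfl⟩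

theorem exists_card_eq_sizeRamsey (r : ℕ) {k : ℕ} {H : Finset (Finset ℕ)} (hH : IsUniform k H) :
    ∃ G, IsUniform k G ∧ Arrows r G H ∧ #G = sizeRamsey k r H := by
  obtain ⟨G, hG, hGH⟩ := exists_arrows_of_isUniform r hH
  have hne : {m | ∃ G, IsUniform k G ∧ Arrows r G H ∧ #G = m}.Nonempty := ⟨#G, G, hG, hGH, rfl⟩
  exact Nat.sInf_mem hne

theorem pathWithEdges_eq_image_Ico (k l m : ℕ) :
    pathWithEdges k l m = (range m).image fun i => Ico (i * (k - l)) (i * (k - l) + k) := by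
  simp only [pathWithEdges, range_eq_Ico, image_add_left_Ico, add_zero]

theorem isUniform_hPath (k l n : ℕ) : IsUniform k (hPath k l n) := by
  simp [IsUniform, hPath, pathWithEdges_eq_image_Ico]

section BlowUp

variable (d : ℕ) [NeZero d]

/-- Each vertex `v` is replaced by the `d` vertices `v * d + t` with `t < d`, i.e. by the
vertices `u` with `u / d = v`. -/
def blowUp (e : Finset ℕ) : Finset ℕ :=
  (e ×ˢ univ).map (Nat.divModEquiv d).symm.toEmbedding

def blowUpMap (f : ℕ → ℕ) : ℕ → ℕ :=
  (Nat.divModEquiv d).symm ∘ Prod.map f id ∘ Nat.divModEquiv d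

variable {d}

@[simp]
theorem mem_blowUp {e : Finset ℕ} {u : ℕ} : u ∈ blowUp d e ↔ u / d ∈ e := by
  simp [blowUp, mem_map_equiv]

theorem card_blowUp (e : Finset ℕ) : #(blowUp d e) = d * #e := by
  rw [blowUp, card_map, card_product, card_univ, Fintype.card_fin, mul_comm]

theorem blowUp_injective : Function.Injective (blowUp d) := by
  intro e e' h
  ext v
  simpa [Nat.mul_div_cancel_left v (NeZero.pos d)] using congrArg (d * v ∈ ·) h

theorem blowUp_Ico (a b : ℕ) : blowUp d (Ico a b) = Ico (d * a) (d * b) := by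
  ext u
  simp [Nat.le_div_iff_mul_le (NeZero.pos d), Nat.div_lt_iff_lt_mul (NeZero.pos d), mul_comm]

theorem image_blowUpMap (f : ℕ → ℕ) (e : Finset ℕ) :
    (blowUp d e).image (blowUpMap d f) = blowUp d (e.image f) := by
  rw [blowUp, blowUp, map_eq_image, map_eq_image, image_image, blowUpMap,
    Function.comp_assoc, Function.comp_assoc, Equiv.coe_toEmbedding, Equiv.self_comp_symm,
    Function.comp_id, ← image_image, prodMap_image_product, image_id]

theorem injOn_blowUpMap {f : ℕ → ℕ} {e : Finset ℕ} (hf : Set.InjOn f e) :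
    Set.InjOn (blowUpMap d f) (blowUp d e) := by
  intro u hu v hv huv
  have hP : Set.InjOn (Prod.map f (id : Fin d → Fin d)) ((e : Set ℕ) ×ˢ Set.univ) := hf.prodMap (Set.injOn_id _)
  apply (Nat.divModEquiv d).injective
  apply hP (by simpa using hu) (by simpa using hv)
  exact (Nat.divModEquiv d).symm.injective huv

theorem hVerts_image_blowUp (H : Finset (Finset ℕ)) :
    hVerts (H.image (blowUp d)) = blowUp d (hVerts H) := by
  ext u
  simp [hVerts]

theorem IsUniform.image_blowUp {k : ℕ} {G : Finset (Finset ℕ)} (hG : IsUniform k G) :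
    IsUniform (d * k) (G.image (blowUp d)) := by
  simp only [IsUniform, forall_mem_image, card_blowUp]
  exact fun e he => by rw [hG e he]

theorem Arrows.image_blowUp {r : ℕ} {G H : Finset (Finset ℕ)} (h : Arrows r G H) :
    Arrows r (G.image (blowUp d)) (H.image (blowUp d)) := by
  intro χ
  obtain ⟨c, f, hf, hH⟩ := h (χ ∘ blowUp d)
  refine ⟨c, blowUpMap d f, ?_, forall_mem_image.mpr fun e he => ?_⟩
  · rw [hVerts_image_blowUp]
    exact injOn_blowUpMap hf
  · obtain ⟨hG, hc⟩ := mem_filter.mp (hH e he)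
    rw [image_blowUpMap]
    exact mem_filter.mpr ⟨mem_image_of_mem _ hG, hc⟩

theorem sizeRamsey_image_blowUp_le (r : ℕ) {k : ℕ} {H : Finset (Finset ℕ)} (hH : IsUniform k H) :
    sizeRamsey (d * k) r (H.image (blowUp d)) ≤ sizeRamsey k r H := by
  obtain ⟨G, hG, hGH, hcard⟩ := exists_card_eq_sizeRamsey r hH
  calc sizeRamsey (d * k) r (H.image (blowUp d))
      ≤ #(G.image (blowUp d)) := sizeRamsey_le hG.image_blowUp hGH.image_blowUp
    _ = #G := card_image_of_injective G blowUp_injective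
    _ = sizeRamsey k r H := hcard

theorem pathWithEdges_mul (k l m : ℕ) :
    pathWithEdges (d * k) (d * l) m = (pathWithEdges k l m).image (blowUp d) := by
  simp only [pathWithEdges_eq_image_Ico, image_image, Function.comp_def, blowUp_Ico, ← Nat.mul_sub,
    mul_add, mul_left_comm]

theorem hPath_mul (k l n : ℕ) : hPath (d * k) (d * l) (d * n) = (hPath k l n).image (blowUp d) := by
  rw [hPath, hPath, ← Nat.mul_sub, ← Nat.mul_sub, Nat.mul_div_mul_left _ _ (NeZero.pos d),
    pathWithEdges_mul]

end BlowUp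

theorem stmt12_general (k r l n d : ℕ) (hd : 1 ≤ d)
    (hdn : d ∣ n) (hdk : d ∣ k) (hdl : d ∣ l) :
    sizeRamsey k r (hPath k l n) ≤ sizeRamsey (k / d) r (hPath (k / d) (l / d) (n / d)) := by
  have : NeZero d := NeZero.of_pos hd
  obtain ⟨k', rfl⟩ := hdk
  obtain ⟨l', rfl⟩ := hdl
  obtain ⟨n', rfl⟩ := hdn
  simp only [Nat.mul_div_cancel_left _ hd]
  rw [hPath_mul]
  exact sizeRamsey_image_blowUp_le r (isUniform_hPath k' l' n')

theorem stmt12 (k r l n d : ℕ) (hk : 2 ≤ k) (hr : 2 ≤ r) (hl1 : 1 ≤ l) (hl2 : l ≤ k - 1)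
    (hn : k ≤ n) (hdvd : (k - l) ∣ (n - l)) (hd : 1 ≤ d)
    (hdn : d ∣ n) (hdk : d ∣ k) (hdl : d ∣ l) :
    sizeRamsey k r (hPath k l n) ≤ sizeRamsey (k / d) r (hPath (k / d) (l / d) (n / d)) :=
  stmt12_general k r l n d hd hdn hdk hdl
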